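/- arXiv:1610.09587 — 3 statements merged into one kernel-verified Lean document; each statement's English description precedes it below -/
import Mathlib

section
/- Let $r \geq c \geq 1$. If $M \subseteq \mathbb{F}_2^r \setminus \{0\}$ contains no copy of $PG(c-1,2)$ (i.e., there is no $c$-dimensional subspace $W \leq \mathbb{F}_2^r$ with $W \setminus \{0\} \subseteq M$), then $|M| \leq 2^r - 2^{r-c+1}$. -/
/-!
Let `E` be the set of nonzero vectors outside `M`. A subspace `W` avoiding `E` can be enlarged by
one dimension while still avoiding `E` as long as `E` does not meet every nonzero coset of `W`:
adjoining a vector `v` adds only the coset `v + W`. Since `V ⧸ W` has `2 ^ (r - dim W)` elements,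
starting from `0` this reaches dimension `c` whenever `|E| + 2 ≤ 2 ^ (r - c + 1)`, and a
`c`-dimensional subspace avoiding `E` is a copy of `PG(c-1,2)` inside `M`.
-/

open Module Submodule

namespace Submodule

variable {V : Type*} [AddCommGroup V] [Module (ZMod 2) V]

theorem mkQ_eq_zero_or_eq_of_mem_sup_span_singleton {W : Submodule (ZMod 2) V} {v x : V}
    (hx : x ∈ W ⊔ span (ZMod 2) {v}) : W.mkQ x = 0 ∨ W.mkQ x = W.mkQ v := by
  obtain ⟨w, hw, _, hz, rfl⟩ := mem_sup.mp hx
  obtain ⟨a, rfl⟩ := mem_span_singleton.mp hz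
  have hw' : (Quotient.mk w : V ⧸ W) = 0 := (Quotient.mk_eq_zero W).mpr hw
  rcases (by decide : ∀ b : ZMod 2, b = 0 ∨ b = 1) a with rfl | rfl
  all_goals simp [hw']

theorem exists_notMem_sup_span_singleton {W : Submodule (ZMod 2) V} {E : Finset V}
    (hE : ∀ x ∈ E, x ∉ W) (hcard : E.card + 1 < Nat.card (V ⧸ W)) :
    ∃ v ∉ W, ∀ x ∈ E, x ∉ W ⊔ span (ZMod 2) {v} := by
  classical
  have hS : (insert 0 (E.image W.mkQ)).card < Nat.card (V ⧸ W) :=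
    (Finset.card_insert_le _ _).trans_lt (by grind [Finset.card_image_le])
  obtain ⟨q, -, hq⟩ := Set.exists_mem_notMem_of_ncard_lt_ncard (t := Set.univ)
    (s := ((insert 0 (E.image W.mkQ) : Finset (V ⧸ W)) : Set (V ⧸ W)))
    (by rwa [Set.ncard_coe_finset, Set.ncard_univ])
  rw [Finset.mem_coe] at hq
  obtain ⟨v, rfl⟩ := W.mkQ_surjective q
  simp only [Finset.mem_insert, Finset.mem_image, not_or, not_exists, not_and] at hq
  refine ⟨v, fun hv => hq.1 ((Quotient.mk_eq_zero W).mpr hv), fun x hxE hx => ?_⟩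
  rcases mkQ_eq_zero_or_eq_of_mem_sup_span_singleton hx with h | h
  · exact hE x hxE ((Quotient.mk_eq_zero W).mp h)
  · exact hq.2 x hxE h

variable [Module.Finite (ZMod 2) V]

theorem exists_finrank_eq_forall_notMem {E : Finset V} (hE : (0 : V) ∉ E) {c : ℕ}
    (hc : c ≤ finrank (ZMod 2) V) (hcard : E.card + 2 ≤ 2 ^ (finrank (ZMod 2) V - c + 1)) :
    ∃ W : Submodule (ZMod 2) V, finrank (ZMod 2) W = c ∧ ∀ x ∈ E, x ∉ W := by
  induction c with
  | zero => exact ⟨⊥, finrank_bot .., fun x hx hxW => hE ((mem_bot _).mp hxW ▸ hx)⟩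
  | succ c ih =>
    have hpow : 2 ^ (finrank (ZMod 2) V - (c + 1) + 1) = 2 ^ (finrank (ZMod 2) V - c) := by
      congr 1; omega
    obtain ⟨W, rfl, hW⟩ := ih (by omega) (hcard.trans (by rw [hpow]; gcongr <;> omega))
    obtain ⟨v, hv, hWv⟩ := exists_notMem_sup_span_singleton hW (by
      rw [natCard_eq_pow_finrank (K := ZMod 2), Nat.card_zmod, finrank_quotient]; omega)
    exact ⟨_, finrank_sup_span_singleton hv, hWv⟩

end Submodule

theorem bose_burton_general (r c : ℕ) (hcr : c ≤ r)
    (M : Finset (Fin r → ZMod 2)) (h0 : (0 : Fin r → ZMod 2) ∉ M)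
    (hM : ¬ ∃ W : Submodule (ZMod 2) (Fin r → ZMod 2),
      Module.finrank (ZMod 2) W = c ∧ ∀ x : Fin r → ZMod 2, x ∈ W → x ≠ 0 → x ∈ M) :
    M.card ≤ 2 ^ r - 2 ^ (r - c + 1) := by
  classical
  by_contra! hbig
  have hcardM : (insert 0 M).card + (insert 0 M)ᶜ.card = 2 ^ r := by
    rw [Finset.card_add_card_compl]; simp
  rw [Finset.card_insert_of_notMem h0] at hcardM
  obtain ⟨W, hWc, hW⟩ := exists_finrank_eq_forall_notMem (E := (insert 0 M)ᶜ) (c := c) (by simp)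
    (by rwa [finrank_fin_fun]) (by rw [finrank_fin_fun]; omega)
  refine hM ⟨W, hWc, fun x hxW hx0 => ?_⟩
  by_contra hxM
  exact hW x (by simp [hx0, hxM]) hxW

/-- Bose-Burton theorem: if `M ⊆ 𝔽₂^r \ {0}` contains no copy of `PG(c-1,2)`,
i.e. no `c`-dimensional subspace all of whose nonzero elements lie in `M`,
then `|M| ≤ 2^r - 2^(r-c+1)`. -/
theorem bose_burton (r c : ℕ) (hc : 1 ≤ c) (hcr : c ≤ r)
    (M : Finset (Fin r → ZMod 2)) (h0 : (0 : Fin r → ZMod 2) ∉ M)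
    (hM : ¬ ∃ W : Submodule (ZMod 2) (Fin r → ZMod 2),
      Module.finrank (ZMod 2) W = c ∧ ∀ x : Fin r → ZMod 2, x ∈ W → x ≠ 0 → x ∈ M) :
    M.card ≤ 2 ^ r - 2 ^ (r - c + 1) :=
  bose_burton_general r c hcr M h0 hM
end

section
/- Let $G$ be a finite abelian group, $H \leq G$ a subgroup, and let $M_1, M_2, M_3 \subseteq G$. Then there exist cosets $H_1, H_2$ of $H$ in $G$ such that: (1) $|M_1 \cap H_1| \geq \frac{|H| |M_1|}{|G|}$, and (2) $|M_2 \cap H_2| + |M_3 \cap (H_1 + H_2)| \geq \frac{|H|(|M_2| + |M_3|)}{|G|}$, where $H_1 + H_2$ denotes the coset $\{a+b : a \in H_1, b \in H_2\}$. -/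
open Classical Finset

private lemma filter_coset_card {G : Type*} [AddCommGroup G] [Fintype G]
    (H : AddSubgroup G) (x : G) :
    (univ.filter (fun g : G => x - g ∈ H)).card = Nat.card H := by
  classical
  rw [Nat.card_eq_fintype_card, Fintype.card_subtype]
  apply Finset.card_bij (fun g _ => x - g)
  · intro a ha
    simp only [mem_filter, mem_univ, true_and] at ha ⊢
    exact ha
  · intro a _ b _ hab
    have : x - (x - a) = x - (x - b) := by rw [hab]
    simpa using this
  · intro b hb
    refine ⟨x - b, ?_, by abel⟩
    simp only [mem_filter, mem_univ, true_and]
    simpa using (Finset.mem_filter.mp hb).2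

private lemma sum_filter_card {G : Type*} [AddCommGroup G] [Fintype G]
    (H : AddSubgroup G) (M : Finset G) :
    ∑ g : G, (M.filter (fun x => x - g ∈ H)).card = Nat.card H * M.card := by
  classical
  simp_rw [Finset.card_filter]
  rw [Finset.sum_comm]
  have : ∀ x : G, (∑ g : G, if x - g ∈ H then 1 else 0)
      = (univ.filter (fun g : G => x - g ∈ H)).card := by
    intro x; rw [Finset.card_filter]
  simp_rw [this, filter_coset_card]
  rw [Finset.sum_const, smul_eq_mul, mul_comm]

open Classical in
/-- Case `c = 2` of the extended Bose-Burton proposition: there exist cosets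
`g₁ + H` and `g₂ + H` with `|M₁ ∩ (g₁+H)| ≥ |H||M₁|/|G|` and
`|M₂ ∩ (g₂+H)| + |M₃ ∩ (g₁+g₂+H)| ≥ |H|(|M₂|+|M₃|)/|G|`. -/
theorem coset_averaging_two (G : Type*) [AddCommGroup G] [Fintype G]
    (H : AddSubgroup G) (M₁ M₂ M₃ : Finset G) :
    ∃ g₁ g₂ : G,
      Nat.card H * M₁.card ≤
        Fintype.card G * (M₁.filter (fun x => x - g₁ ∈ H)).card ∧
      Nat.card H * (M₂.card + M₃.card) ≤
        Fintype.card G * ((M₂.filter (fun x => x - g₂ ∈ H)).card +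
          (M₃.filter (fun x => x - (g₁ + g₂) ∈ H)).card) := by
  classical
  have h1 : ∑ g : G, Nat.card H * M₁.card ≤
      ∑ g : G, Fintype.card G * (M₁.filter (fun x => x - g ∈ H)).card := by
    rw [Finset.sum_const, ← Finset.mul_sum, sum_filter_card, smul_eq_mul,
      Finset.card_univ, mul_comm (Fintype.card G)]
  obtain ⟨g₁, -, hg₁⟩ := Finset.exists_le_of_sum_le ⟨(0:G), mem_univ _⟩ h1
  refine ⟨g₁, ?_⟩
  have hre : ∑ g : G, (M₃.filter (fun x => x - (g₁ + g) ∈ H)).card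
      = ∑ g : G, (M₃.filter (fun x => x - g ∈ H)).card := by
    apply Finset.sum_nbij' (fun g => g₁ + g) (fun g => g - g₁) <;>
      intro a _ <;> simp [add_sub_cancel_left]
  have h2 : ∑ g : G, Nat.card H * (M₂.card + M₃.card) ≤
      ∑ g : G, Fintype.card G * ((M₂.filter (fun x => x - g ∈ H)).card +
          (M₃.filter (fun x => x - (g₁ + g) ∈ H)).card) := by
    have : ∑ g : G, Fintype.card G * ((M₂.filter (fun x => x - g ∈ H)).card +
          (M₃.filter (fun x => x - (g₁ + g) ∈ H)).card)
        = Fintype.card G * (∑ g : G, (M₂.filter (fun x => x - g ∈ H)).card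
          + ∑ g : G, (M₃.filter (fun x => x - (g₁ + g) ∈ H)).card) := by
      rw [← Finset.sum_add_distrib, Finset.mul_sum]
    rw [this, hre, sum_filter_card, sum_filter_card, Finset.sum_const, smul_eq_mul,
      Finset.card_univ]
    exact le_of_eq (by ring)
  obtain ⟨g₂, -, hg₂⟩ := Finset.exists_le_of_sum_le ⟨(0:G), mem_univ _⟩ h2
  exact ⟨g₂, hg₁, hg₂⟩
end

section
/- Let $G$ be a finite abelian group, $H \leq G$ a subgroup, $c \geq 1$, and let $M_1, \dots, M_{2^c - 1}$ be subsets of $G$. Then there exist cosets $H_1, \dots, H_c$ of $H$ in $G$ such that for every $1 \leq i \leq c$: $\frac{1}{|H|} \sum_{x \in \{0,1\}^{i-1}} \big| M_{2^{i-1} + \sum_{j=1}^{i-1} x_j 2^{j-1}} \cap (H_i + \sum_{j=1}^{i-1} x_j H_j) \big| \geq \sum_{j=2^{i-1}}^{2^i - 1} \frac{|M_j|}{|G|}$, where addition of cosets is the induced operation in $G/H$. -/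
/-!
The cosets are chosen greedily, the `i`-th one depending only on the earlier ones. For fixed
representatives `s_x` of the earlier sums, every `y ∈ G` lies in `t + s_x + H` for exactly `|H|`
translates `t`, so averaging over `t ∈ G` gives a `t` with
`|G| ∑ₓ |Mₓ ∩ (t + s_x + H)| ≥ |H| ∑ₓ |Mₓ|`; and `x ↦ 2^i + ∑ xⱼ 2^j` enumerates `[2^i, 2^(i+1))`.
-/

open Finset

theorem exists_seq_forall_of_forall_exists {α : Type*} {P : (i : ℕ) → (Fin i → α) → α → Prop}
    (hP : ∀ i g, ∃ t, P i g t) : ∃ h : ℕ → α, ∀ i, P i (fun j => h j) (h i) := by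
  choose f hf using hP
  refine ⟨Nat.strongRec fun i ih => f i fun j => ih j j.isLt, fun i => ?_⟩
  dsimp only
  rw [Nat.strongRec_eq]
  exact hf _ _

theorem sum_bool_fun_eq_sum_range_two_pow {M : Type*} [AddCommMonoid M] (i : ℕ) (F : ℕ → M) :
    ∑ x : Fin i → Bool, F (∑ j : Fin i, if x j then 2 ^ (j : ℕ) else 0) =
      ∑ n ∈ range (2 ^ i), F n := by
  rw [← Fin.sum_univ_eq_sum_range]
  refine Fintype.sum_equiv
    ((Equiv.arrowCongr (Equiv.refl _) finTwoEquiv.symm).trans finFunctionFinEquiv) _ _ fun x => ?_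
  rw [Equiv.trans_apply, finFunctionFinEquiv_apply]
  refine congrArg F (sum_congr rfl fun j _ => ?_)
  cases hx : x j <;> simp [finTwoEquiv, hx]

theorem sum_bool_fun_eq_sum_Ico_two_pow {M : Type*} [AddCommMonoid M] (i : ℕ) (F : ℕ → M) :
    ∑ x : Fin i → Bool, F (2 ^ i + ∑ j : Fin i, if x j then 2 ^ (j : ℕ) else 0) =
      ∑ n ∈ Ico (2 ^ i) (2 ^ (i + 1)), F n := by
  rw [sum_Ico_eq_sum_range, pow_succ, mul_two, Nat.add_sub_cancel_left]
  exact sum_bool_fun_eq_sum_range_two_pow i fun n => F (2 ^ i + n)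

section Averaging

open scoped Classical

variable {G : Type*} [AddCommGroup G] [Fintype G] (H : AddSubgroup G)

theorem AddSubgroup.card_filter_sub_add_mem (y s : G) :
    #{t : G | y - (t + s) ∈ H} = Fintype.card H := by
  rw [Fintype.card_subtype]
  refine card_equiv (Equiv.subLeft (y - s)) fun t => ?_
  simp only [mem_filter, mem_univ, true_and, Equiv.subLeft_apply]
  rw [sub_add_eq_sub_sub_swap]

theorem AddSubgroup.sum_card_filter_sub_add_mem (A : Finset G) (s : G) :
    ∑ t : G, #{y ∈ A | y - (t + s) ∈ H} = #A * Fintype.card H := by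
  simp only [card_filter]
  rw [sum_comm]
  simp only [sum_boole, Nat.cast_id, H.card_filter_sub_add_mem, sum_const, smul_eq_mul]

theorem AddSubgroup.exists_card_mul_sum_card_le_card_mul_sum_card_filter_sub_mem {ι : Type*}
    [Fintype ι] (A : ι → Finset G) (s : ι → G) :
    ∃ t : G, Fintype.card H * ∑ k, #(A k) ≤
      Fintype.card G * ∑ k, #{y ∈ A k | y - (t + s k) ∈ H} := by
  have htotal : ∑ t : G, ∑ k, #{y ∈ A k | y - (t + s k) ∈ H} = Fintype.card H * ∑ k, #(A k) := by
    rw [sum_comm, mul_sum]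
    exact sum_congr rfl fun k _ => by rw [H.sum_card_filter_sub_add_mem, mul_comm]
  obtain ⟨t, -, ht⟩ := exists_le_of_sum_le (s := univ)
    (f := fun _ => Fintype.card H * ∑ k, #(A k))
    (g := fun t => Fintype.card G * ∑ k, #{y ∈ A k | y - (t + s k) ∈ H})
    univ_nonempty (by rw [sum_const, card_univ, ← mul_sum, htotal, smul_eq_mul])
  exact ⟨t, ht⟩

theorem AddSubgroup.exists_bose_burton_step (M : ℕ → Finset G) (i : ℕ) (g : Fin i → G) :
    ∃ t : G, Fintype.card H * ∑ n ∈ Ico (2 ^ i) (2 ^ (i + 1)), #(M n) ≤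
      Fintype.card G * ∑ x : Fin i → Bool,
        #{y ∈ M (2 ^ i + ∑ j : Fin i, if x j then 2 ^ (j : ℕ) else 0) |
          y - (t + ∑ j : Fin i, if x j then g j else 0) ∈ H} := by
  rw [← sum_bool_fun_eq_sum_Ico_two_pow i fun n => #(M n)]
  exact H.exists_card_mul_sum_card_le_card_mul_sum_card_filter_sub_mem _ _

end Averaging

open Classical in
theorem extended_bose_burton_general (G : Type*) [AddCommGroup G] [Fintype G]
    (H : AddSubgroup G) (c : ℕ) (M : ℕ → Finset G) :
    ∃ h : Fin c → G, ∀ i : Fin c,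
      Fintype.card H *
          ∑ j ∈ Finset.Ico (2 ^ (i : ℕ)) (2 ^ ((i : ℕ) + 1)), (M j).card ≤
        Fintype.card G *
          ∑ x : Fin (i : ℕ) → Bool,
            ((M (2 ^ (i : ℕ) + ∑ j : Fin (i : ℕ), if x j then 2 ^ (j : ℕ) else 0)).filter
              (fun y => y - (h i + ∑ j : Fin (i : ℕ),
                if x j then h (Fin.castLE i.isLt.le j) else 0) ∈ H)).card := by
  obtain ⟨h, hh⟩ := exists_seq_forall_of_forall_exists (H.exists_bose_burton_step M)
  exact ⟨fun i => h i, fun i => hh i⟩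

open Classical in
/-- Extended Bose-Burton proposition: for a subgroup `H` of a finite abelian
group `G` and subsets `M₁, …, M_{2^c - 1}` of `G`, there are cosets
`H₁, …, H_c` of `H` (given by representatives `h 0, …, h (c-1)`) such that for
each `i`, `(1/|H|) ∑_{x ∈ {0,1}^{i-1}} |M_{2^{i-1} + ∑ xⱼ2^{j-1}} ∩
(H_i + ∑ xⱼ Hⱼ)| ≥ ∑_{j=2^{i-1}}^{2^i-1} |M_j| / |G|`. -/
theorem extended_bose_burton (G : Type*) [AddCommGroup G] [Fintype G]
    (H : AddSubgroup G) (c : ℕ) (hc : 1 ≤ c) (M : ℕ → Finset G) :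
    ∃ h : Fin c → G, ∀ i : Fin c,
      Fintype.card H *
          ∑ j ∈ Finset.Ico (2 ^ (i : ℕ)) (2 ^ ((i : ℕ) + 1)), (M j).card ≤
        Fintype.card G *
          ∑ x : Fin (i : ℕ) → Bool,
            ((M (2 ^ (i : ℕ) + ∑ j : Fin (i : ℕ), if x j then 2 ^ (j : ℕ) else 0)).filter
              (fun y => y - (h i + ∑ j : Fin (i : ℕ),
                if x j then h (Fin.castLE i.isLt.le j) else 0) ∈ H)).card :=
  extended_bose_burton_general G H c M
end
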